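/- Let α ∈ ℝ be irrational, E ∈ ℝ, and let v, w be even real trigonometric polynomials of degrees d and l. If there exists H ∈ C^ω(𝕋, Sp_{2l×2}(ℝ)) such that L^v_{E,w}(x)H(x) = H(x+α) for all x ∈ ℝ, then the dual finite-range operator L^w_{v,α,0}, acting on ℓ²(ℤ,ℂ) by (Lu)_n = Σ_{k=−d}^d v̂_k u_{n+k} + w(nα)u_n, has two linearly independent ℓ²(ℤ,ℂ) eigenfunctions with eigenvalue E; in particular E is an eigenvalue of L^w_{v,α,0} of multiplicity at least 2. -/

import Mathlib

open scoped Real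
open Filter Matrix

noncomputable section

/-- The trigonometric polynomial with coefficients `c` (supported in `[-d,d]`),
evaluated at a complex point: `v(z) = Σ_{k=-d}^d c_k e^{2πikz}`. -/
def trigPoly (d : ℕ) (c : ℤ → ℝ) (z : ℂ) : ℂ :=
  ∑ k ∈ Finset.Icc (-(d:ℤ)) (d:ℤ), (c k : ℂ) * Complex.exp (2 * Real.pi * Complex.I * k * z)

/-- The `2m × 2m` one-step transfer (cocycle) matrix of the finite-range operator with
symbol coefficients `chat` (of degree `m`) and potential `pot`, at energy `E`: the first row is
`(1/chat m)·(-chat (m-1), …, -chat 1, E - pot x - chat 0, -chat (-1), …, -chat (-m))`,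
the entries just below the diagonal are `1`, and all other entries vanish. -/
def dualMat (m : ℕ) (chat : ℤ → ℝ) (pot : ℝ → ℂ) (E : ℂ) (x : ℝ) :
    Matrix (Fin (2*m)) (Fin (2*m)) ℂ :=
  fun i j =>
    if (i : ℕ) = 0 then
      ((chat m : ℂ))⁻¹ * (if (j : ℕ) + 1 = m then E - pot x - (chat 0 : ℂ)
        else -((chat ((m:ℤ) - 1 - (j : ℕ)) : ℂ)))
    else if (i : ℕ) = (j : ℕ) + 1 then 1 else 0

/-- The `l × l` upper-triangular Toeplitz matrix with first row `(c l, c (l-1), …, c 1)`. -/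
def toeplitz (l : ℕ) (c : ℤ → ℝ) : Matrix (Fin l) (Fin l) ℝ :=
  fun i j => if (i : ℕ) ≤ (j : ℕ) then c ((l : ℤ) - (j : ℕ) + (i : ℕ)) else 0

/-- The symplectic form `S = [[0, -Cᵀ],[C, 0]]` built from the Toeplitz matrix of `c`. -/
def sympForm (l : ℕ) (c : ℤ → ℝ) : Matrix (Fin (2*l)) (Fin (2*l)) ℝ :=
  Matrix.reindex (finSumFinEquiv.trans (finCongr (by omega)))
    (finSumFinEquiv.trans (finCongr (by omega)))
    (Matrix.fromBlocks 0 (-(toeplitz l c)ᵀ) (toeplitz l c) 0)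

/-- `J = [[0,1],[-1,0]]`. -/
def Jmat : Matrix (Fin 2) (Fin 2) ℝ := !![0, 1; -1, 0]

/-- Membership in `Sp_{2l×2}(ℝ) = {F : Fᵀ S F = J}`. -/
def IsSymplCol (l : ℕ) (c : ℤ → ℝ) (F : Matrix (Fin (2*l)) (Fin 2) ℝ) : Prop :=
  Fᵀ * sympForm l c * F = Jmat

/-- `H ∈ C^ω(𝕋, X)` for a real matrix valued map: every entry is real-analytic
on ℝ and `H` is `1`-periodic. -/
def IsAnalyticPeriodic {m n : ℕ} (H : ℝ → Matrix (Fin m) (Fin n) ℝ) : Prop :=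
  (∀ i j, AnalyticOnNhd ℝ (fun x => H x i j) Set.univ) ∧ ∀ x : ℝ, H (x + 1) = H x


/-! Rows `1, …, 2l-1` of `L H = H(· + α)` say that row `i` of `H` is row `0` translated by `iα`,
so every row is a translate of the row `G = H_{l-1}`, and the first row becomes the difference
equation `∑_k ŵ_k G(x + kα) = (E - v(x)) G(x)` for each of the two columns of `G`. On Fourier
coefficients, translation by `kα` becomes multiplication by `e^{2πinkα}` and multiplication by
`v` becomes convolution with `v̂`, so the coefficient sequences of the two columns (in `ℓ²` by
Parseval) are eigenfunctions of the dual operator. They are independent: by uniqueness of Fourier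
coefficients a relation between them is one between the columns of `G`; its real and imaginary
parts propagate to every row as `H(x)p = 0`, and `Hᵀ S H = J` forces `p = 0`. -/

open MeasureTheory

theorem Finset.sum_Icc_neg_comp_neg {M : Type*} [AddCommMonoid M] (d : ℕ) (F : ℤ → M) :
    ∑ k ∈ Finset.Icc (-(d : ℤ)) d, F (-k) = ∑ k ∈ Finset.Icc (-(d : ℤ)) d, F k :=
  Finset.sum_nbij' (fun k => -k) (fun k => -k)
    (fun k hk => by rw [Finset.mem_Icc] at hk ⊢; omega)
    (fun k hk => by rw [Finset.mem_Icc] at hk ⊢; omega)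
    (fun k _ => neg_neg k) (fun k _ => neg_neg k) (fun _ _ => rfl)

theorem Finset.sum_Icc_neg_eq_add_sum_fin {M : Type*} [AddCommMonoid M] (m : ℕ) (F : ℤ → M) :
    ∑ k ∈ Finset.Icc (-(m : ℤ)) m, F k = F m + ∑ j : Fin (2 * m), F ((m : ℤ) - 1 - (j : ℕ)) := by
  rw [Finset.Icc_eq_cons_Ico (by omega), Finset.sum_cons,
    Fin.sum_univ_eq_sum_range (fun j => F ((m : ℤ) - 1 - j))]
  congr 1
  apply Finset.sum_nbij' (fun k => ((m : ℤ) - 1 - k).toNat) (fun j => (m : ℤ) - 1 - j) <;>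
    intro k hk <;> simp only [Finset.mem_Ico, Finset.mem_range] at hk ⊢
  any_goals omega
  exact congrArg F (by omega)

theorem LinearIndependent.complex_ofReal {ι X : Type*} [Fintype ι] {f : ι → X → ℝ}
    (hf : LinearIndependent ℝ f) : LinearIndependent ℂ fun i x => (f i x : ℂ) := by
  rw [Fintype.linearIndependent_iff] at hf ⊢
  intro p hp
  have hre : ∑ i, (p i).re • f i = 0 := by
    ext x
    simpa using congrArg Complex.re (congrFun hp x)
  have him : ∑ i, (p i).im • f i = 0 := by
    ext x
    simpa using congrArg Complex.im (congrFun hp x)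
  exact fun i => Complex.ext (hf _ hre i) (hf _ him i)

theorem Function.Periodic.exists_continuousMap_addCircle {T : ℝ} {Y : Type*} [TopologicalSpace Y]
    {G : ℝ → Y} (hper : Function.Periodic G T) (hG : Continuous G) :
    ∃ g : C(AddCircle T, Y), ∀ x : ℝ, g x = G x :=
  ⟨⟨hper.lift, continuous_coinduced_dom.mpr hG⟩, hper.lift_coe⟩

namespace AddCircle

theorem fourier_add_apply {T : ℝ} (n : ℤ) (x y : AddCircle T) :
    fourier n (x + y) = fourier n x * fourier n y := by
  simp only [fourier_apply, smul_add, toCircle_add, Circle.coe_mul]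

theorem linearIndependent_of_linearIndependent_coe {T : ℝ} {ι : Type*}
    {g : ι → C(AddCircle T, ℂ)} (hg : LinearIndependent ℂ fun i (x : ℝ) => g i x) :
    LinearIndependent ℂ g :=
  hg.of_comp (LinearMap.funLeft ℂ ℂ ((↑) : ℝ → AddCircle T) ∘ₗ ContinuousMap.coeFnLinearMap ℂ)

variable {T : ℝ} [Fact (0 < T)]

theorem integrable_haarAddCircle {E : Type*} [NormedAddCommGroup E] (f : C(AddCircle T, E)) :
    Integrable f haarAddCircle :=
  f.continuous.integrable_of_hasCompactSupport (HasCompactSupport.of_compactSpace _)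

theorem fourierCoeff_comp_add_right {E : Type*} [NormedAddCommGroup E] [NormedSpace ℂ E]
    (f : AddCircle T → E) (a : AddCircle T) (n : ℤ) :
    fourierCoeff (fun t => f (t + a)) n = fourier n a • fourierCoeff f n := by
  have hshift (t : AddCircle T) :
      fourier (-n) t • f (t + a) = fourier n a • (fourier (-n) (t + a) • f (t + a)) := by
    rw [smul_smul, fourier_add_apply, mul_left_comm, ← fourier_add, add_neg_cancel, fourier_zero,
      mul_one]
  simp only [fourierCoeff, hshift, integral_smul]
  rw [integral_add_right_eq_self (fun s => fourier (-n) s • f s) a]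

theorem fourierCoeff_fourier_mul (f : AddCircle T → ℂ) (k n : ℤ) :
    fourierCoeff (fun t => fourier k t * f t) n = fourierCoeff f (n - k) := by
  simp only [fourierCoeff, smul_eq_mul, ← mul_assoc, ← fourier_add, neg_sub, neg_add_eq_sub]

theorem summable_sq_norm_fourierCoeff (f : C(AddCircle T, ℂ)) :
    Summable fun n => ‖fourierCoeff f n‖ ^ 2 := by
  simpa only [fourierCoeff_toLp] using
    (hasSum_sq_fourierCoeff (ContinuousMap.toLp (E := ℂ) 2 haarAddCircle ℂ f)).summable

theorem fourierCoeff_injective :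
    Function.Injective fun f : C(AddCircle T, ℂ) => fourierCoeff f := by
  intro f g h
  apply ContinuousMap.toLp_injective (μ := haarAddCircle) (p := 2) (𝕜 := ℂ)
  apply fourierBasis.repr.injective
  ext n
  simpa only [fourierBasis_repr, fourierCoeff_toLp] using congrFun h n

variable (T) in
def fourierCoeffLinearMap : C(AddCircle T, ℂ) →ₗ[ℂ] ℤ → ℂ where
  toFun f := fourierCoeff f
  map_add' f g := fourierCoeff.add (integrable_haarAddCircle f) (integrable_haarAddCircle g)
  map_smul' c f := funext fun n => fourierCoeff.const_smul f c n

@[simp]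
theorem fourierCoeffLinearMap_apply (f : C(AddCircle T, ℂ)) :
    fourierCoeffLinearMap T f = fourierCoeff f := rfl

theorem linearIndependent_fourierCoeff {ι : Type*} {g : ι → C(AddCircle T, ℂ)}
    (hg : LinearIndependent ℂ g) : LinearIndependent ℂ fun i => fourierCoeff (g i) :=
  hg.map' (fourierCoeffLinearMap T) (LinearMap.ker_eq_bot.mpr fourierCoeff_injective)

theorem fourierCoeff_eq_of_shift_eq_mul (g : C(AddCircle T, ℂ)) (s t : Finset ℤ) (a b : ℤ → ℂ)
    (β : ℤ → AddCircle T) (E : ℂ)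
    (h : ∀ x, ∑ k ∈ s, a k * g (x + β k) = (E - ∑ k ∈ t, b k * fourier k x) * g x) (n : ℤ) :
    (∑ k ∈ s, a k * fourier n (β k)) * fourierCoeff g n
      = E * fourierCoeff g n - ∑ k ∈ t, b k * fourierCoeff g (n - k) := by
  have hg : ∑ k ∈ s, a k • g.comp (ContinuousMap.addRight (β k))
      = E • g - ∑ k ∈ t, b k • (fourier k * g) := by
    ext x
    simp [h, sub_mul, Finset.sum_mul, mul_assoc]
  have hcoeff := congrFun (congrArg (fourierCoeffLinearMap T) hg) n
  simp only [map_sum, map_sub, map_smul, fourierCoeffLinearMap_apply, ContinuousMap.coe_comp,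
    ContinuousMap.coe_mul, Function.comp_def, Pi.mul_def, ContinuousMap.coe_addRight,
    Finset.sum_apply, Pi.sub_apply, Pi.smul_apply, smul_eq_mul, fourierCoeff_comp_add_right,
    fourierCoeff_fourier_mul] at hcoeff
  rw [Finset.sum_mul, ← hcoeff]
  simp only [mul_assoc]

end AddCircle

section DualMat

variable {m : ℕ} {chat : ℤ → ℝ} {pot : ℝ → ℂ} {E : ℂ} {x : ℝ} {ι : Type*}

theorem dualMat_mul_apply_succ (M : Matrix (Fin (2 * m)) ι ℂ) {i : ℕ} (hi : i + 1 < 2 * m)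
    (c : ι) : (dualMat m chat pot E x * M) ⟨i + 1, hi⟩ c = M ⟨i, by omega⟩ c := by
  rw [Matrix.mul_apply, Finset.sum_eq_single ⟨i, by omega⟩]
  · simp [dualMat]
  · intro j _ hj
    have hij : i ≠ j := fun h => hj (Fin.ext h.symm)
    simp [dualMat, hij]
  · simp

theorem mul_dualMat_apply_zero (hm : 0 < m) (hlead : chat m ≠ 0) (j : Fin (2 * m)) :
    chat m * dualMat m chat pot E x ⟨0, by omega⟩ j
      = (if j = ⟨m - 1, by omega⟩ then E - pot x else 0) - chat ((m : ℤ) - 1 - (j : ℕ)) := by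
  have hlead' : (chat m : ℂ) ≠ 0 := by exact_mod_cast hlead
  by_cases hj : (j : ℕ) + 1 = m
  · have hj' : j = ⟨m - 1, by omega⟩ := Fin.ext (show (j : ℕ) = m - 1 by omega)
    have h0 : (m : ℤ) - 1 - (j : ℕ) = 0 := by omega
    simp only [dualMat, if_true, hj, h0, if_pos hj']
    field_simp
  · have hj' : j ≠ ⟨m - 1, by omega⟩ := fun h => hj (by rw [h]; exact Nat.sub_add_cancel hm)
    simp [dualMat, hj, hj', hlead']

theorem mul_dualMat_mul_apply_zero (hm : 0 < m) (hlead : chat m ≠ 0)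
    (M : Matrix (Fin (2 * m)) ι ℂ) (c : ι) :
    chat m * (dualMat m chat pot E x * M) ⟨0, by omega⟩ c
      = (E - pot x) * M ⟨m - 1, by omega⟩ c
        - ∑ j : Fin (2 * m), chat ((m : ℤ) - 1 - (j : ℕ)) * M j c := by
  simp only [Matrix.mul_apply, Finset.mul_sum, ← mul_assoc, mul_dualMat_apply_zero hm hlead,
    sub_mul, Finset.sum_sub_distrib, ite_mul, zero_mul, Finset.sum_ite_eq', Finset.mem_univ,
    if_true]

variable {α : ℝ} {H : ℝ → Matrix (Fin (2 * m)) ι ℝ}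

theorem apply_succ_of_dualMat_mul_eq
    (hconj : ∀ x, dualMat m chat pot E x * (H x).map Complex.ofReal
      = (H (x + α)).map Complex.ofReal)
    (x : ℝ) {i : ℕ} (hi : i + 1 < 2 * m) (c : ι) :
    H (x + α) ⟨i + 1, hi⟩ c = H x ⟨i, by omega⟩ c := by
  have h := congrFun (congrFun (hconj x) ⟨i + 1, hi⟩) c
  rw [dualMat_mul_apply_succ, Matrix.map_apply, Matrix.map_apply] at h
  exact_mod_cast h.symm

theorem apply_eq_apply_zero_of_dualMat_mul_eq
    (hconj : ∀ x, dualMat m chat pot E x * (H x).map Complex.ofReal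
      = (H (x + α)).map Complex.ofReal)
    (x : ℝ) (i : Fin (2 * m)) (c : ι) :
    H x i c = H (x - i * α) ⟨0, i.pos⟩ c := by
  obtain ⟨i, hi⟩ := i
  induction i generalizing x with
  | zero => simp
  | succ i ih =>
    obtain ⟨y, rfl⟩ : ∃ y, x = y + α := ⟨x - α, by ring⟩
    rw [apply_succ_of_dualMat_mul_eq hconj, ih]
    congr 1
    push_cast
    ring

theorem apply_eq_apply_of_dualMat_mul_eq
    (hconj : ∀ x, dualMat m chat pot E x * (H x).map Complex.ofReal
      = (H (x + α)).map Complex.ofReal)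
    (x : ℝ) (i j : Fin (2 * m)) (c : ι) :
    H x i c = H (x + ((j : ℕ) - (i : ℕ)) * α) j c := by
  rw [apply_eq_apply_zero_of_dualMat_mul_eq hconj x i,
    apply_eq_apply_zero_of_dualMat_mul_eq hconj _ j]
  congr 1
  ring

theorem sum_shift_eq_of_dualMat_mul_eq
    (hconj : ∀ x, dualMat m chat pot E x * (H x).map Complex.ofReal
      = (H (x + α)).map Complex.ofReal)
    (hm : 0 < m) (hlead : chat m ≠ 0) (x : ℝ) (c : ι) :
    ∑ k ∈ Finset.Icc (-(m : ℤ)) m, chat k * (H (x + k * α) ⟨m - 1, by omega⟩ c : ℂ)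
      = (E - pot x) * H x ⟨m - 1, by omega⟩ c := by
  set j₀ : Fin (2 * m) := ⟨m - 1, by omega⟩
  have hj₀ : ((j₀ : ℕ) : ℝ) = m - 1 := by simp [j₀, Nat.cast_pred hm]
  have hrow₀ : H (x + α) ⟨0, by omega⟩ c = H (x + (m : ℤ) * α) j₀ c := by
    rw [apply_eq_apply_of_dualMat_mul_eq hconj _ _ j₀, hj₀]
    congr 1
    push_cast
    ring
  have hrow (j : Fin (2 * m)) :
      H x j c = H (x + (((m : ℤ) - 1 - (j : ℕ) : ℤ) : ℝ) * α) j₀ c := by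
    rw [apply_eq_apply_of_dualMat_mul_eq hconj _ _ j₀, hj₀]
    push_cast
    ring_nf
  have h := mul_dualMat_mul_apply_zero (pot := pot) (E := E) (x := x) hm hlead
    ((H x).map Complex.ofReal) c
  simp only [hconj x, Matrix.map_apply, hrow₀] at h
  rw [Finset.sum_congr rfl fun j _ => by rw [hrow j]] at h
  rw [Finset.sum_Icc_neg_eq_add_sum_fin]
  linear_combination h

theorem linearIndependent_apply_of_dualMat_mul_eq [Fintype ι]
    (hconj : ∀ x, dualMat m chat pot E x * (H x).map Complex.ofReal
      = (H (x + α)).map Complex.ofReal)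
    {x₀ : ℝ} (hinj : ∀ p : ι → ℝ, H x₀ *ᵥ p = 0 → p = 0) (j : Fin (2 * m)) :
    LinearIndependent ℝ fun c x => H x j c := by
  rw [Fintype.linearIndependent_iff]
  intro p hp
  suffices H x₀ *ᵥ p = 0 from congrFun (hinj p this)
  ext i
  have h := congrFun hp (x₀ + ((j : ℕ) - (i : ℕ)) * α)
  simp only [Finset.sum_apply, Pi.smul_apply, smul_eq_mul, Pi.zero_apply] at h
  simp only [Matrix.mulVec, dotProduct, apply_eq_apply_of_dualMat_mul_eq hconj x₀ i j,
    Pi.zero_apply]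
  simpa only [mul_comm] using h

end DualMat

theorem IsSymplCol.eq_zero_of_mulVec_eq_zero {l : ℕ} {c : ℤ → ℝ}
    {F : Matrix (Fin (2 * l)) (Fin 2) ℝ} (hF : IsSymplCol l c F) {p : Fin 2 → ℝ}
    (hp : F *ᵥ p = 0) : p = 0 := by
  have hJJ : Jmat * Jmat = -1 := by
    ext i j
    fin_cases i <;> fin_cases j <;> simp [Jmat]
  have hJp : Jmat *ᵥ p = 0 := by
    rw [← hF, ← Matrix.mulVec_mulVec, hp, Matrix.mulVec_zero]
  calc p = -((Jmat * Jmat) *ᵥ p) := by rw [hJJ, Matrix.neg_mulVec, Matrix.one_mulVec, neg_neg]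
    _ = 0 := by rw [← Matrix.mulVec_mulVec, hJp, Matrix.mulVec_zero, neg_zero]

theorem trigPoly_ofReal (d : ℕ) (c : ℤ → ℝ) (x : ℝ) :
    trigPoly d c x = ∑ k ∈ Finset.Icc (-(d : ℤ)) d, c k * fourier k (x : AddCircle (1 : ℝ)) := by
  simp only [trigPoly, fourier_coe_apply, Complex.ofReal_one, div_one]

theorem sum_mul_fourier_eq_trigPoly (l : ℕ) (c : ℤ → ℝ) (α : ℝ) (n : ℤ) :
    ∑ k ∈ Finset.Icc (-(l : ℤ)) l, c k * fourier n ((k * α : ℝ) : AddCircle (1 : ℝ))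
      = trigPoly l c ((n * α : ℝ) : ℂ) := by
  simp only [trigPoly_ofReal, fourier_coe_apply]
  refine Finset.sum_congr rfl fun k _ => ?_
  push_cast
  ring_nf

theorem fourierCoeff_dual_eigen {d l : ℕ} {vhat what : ℤ → ℝ}
    (hveven : ∀ k : ℤ, vhat (-k) = vhat k) {α E : ℝ} (g : C(AddCircle (1 : ℝ), ℂ))
    (hg : ∀ x : ℝ, ∑ k ∈ Finset.Icc (-(l : ℤ)) l, what k * g ((x + k * α : ℝ) : AddCircle (1 : ℝ))
      = (E - trigPoly d vhat x) * g x) (n : ℤ) :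
    (∑ k ∈ Finset.Icc (-(d : ℤ)) d, (vhat k : ℂ) * fourierCoeff g (n + k))
      + trigPoly l what ((n * α : ℝ) : ℂ) * fourierCoeff g n = E * fourierCoeff g n := by
  have hcircle (t : AddCircle (1 : ℝ)) :
      ∑ k ∈ Finset.Icc (-(l : ℤ)) l, (what k : ℂ) * g (t + ((k * α : ℝ) : AddCircle (1 : ℝ)))
        = (E - ∑ k ∈ Finset.Icc (-(d : ℤ)) d, (vhat k : ℂ) * fourier k t) * g t := by
    induction t using QuotientAddGroup.induction_on with
    | H x => simpa only [← trigPoly_ofReal, ← AddCircle.coe_add] using hg x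
  have h := AddCircle.fourierCoeff_eq_of_shift_eq_mul g _ _ _ _ _ _ hcircle n
  rw [sum_mul_fourier_eq_trigPoly, ← Finset.sum_Icc_neg_comp_neg] at h
  simp only [hveven, sub_neg_eq_add] at h
  linear_combination h

theorem statement16_general
    (α : ℝ) (E : ℝ)
    (d l : ℕ) (hl : 1 ≤ l)
    (vhat what : ℤ → ℝ)
    (hveven : ∀ k : ℤ, vhat (-k) = vhat k)
    (hwlead : what (l : ℤ) ≠ 0)
    (H : ℝ → Matrix (Fin (2*l)) (Fin 2) ℝ)
    (hHan : IsAnalyticPeriodic H)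
    (hHsymp : ∀ x : ℝ, IsSymplCol l what (H x))
    (hconj : ∀ x : ℝ,
      dualMat l what (fun t => trigPoly d vhat (t : ℂ)) (E : ℂ) x * (H x).map Complex.ofReal
        = (H (x + α)).map Complex.ofReal) :
    ∃ u v : ℤ → ℂ,
      Summable (fun n : ℤ => ‖u n‖ ^ 2) ∧
      Summable (fun n : ℤ => ‖v n‖ ^ 2) ∧
      LinearIndependent ℂ ![u, v] ∧
      (∀ n : ℤ,
        (∑ k ∈ Finset.Icc (-(d:ℤ)) (d:ℤ), (vhat k : ℂ) * u (n + k)) +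
          trigPoly l what (((n : ℝ) * α : ℝ) : ℂ) * u n = (E : ℂ) * u n) ∧
      (∀ n : ℤ,
        (∑ k ∈ Finset.Icc (-(d:ℤ)) (d:ℤ), (vhat k : ℂ) * v (n + k)) +
          trigPoly l what (((n : ℝ) * α : ℝ) : ℂ) * v n = (E : ℂ) * v n) := by
  set j₀ : Fin (2 * l) := ⟨l - 1, by omega⟩
  have hper (c : Fin 2) : Function.Periodic (fun x => (H x j₀ c : ℂ)) 1 := fun x => by
    simp only [hHan.2 x]
  have hcont (c : Fin 2) : Continuous fun x => (H x j₀ c : ℂ) :=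
    Complex.continuous_ofReal.comp (continuousOn_univ.mp (hHan.1 j₀ c).continuousOn)
  choose g hg using fun c => (hper c).exists_continuousMap_addCircle (hcont c)
  have heig (c : Fin 2) (n : ℤ) := fourierCoeff_dual_eigen hveven (g c) (fun x => by
    simpa only [hg] using sum_shift_eq_of_dualMat_mul_eq hconj hl hwlead x c) n
  have hindep : LinearIndependent ℂ fun c => fourierCoeff (g c) := by
    refine AddCircle.linearIndependent_fourierCoeff
      (AddCircle.linearIndependent_of_linearIndependent_coe ?_)
    simpa only [hg] using (linearIndependent_apply_of_dualMat_mul_eq hconj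
      (fun p => (hHsymp 0).eq_zero_of_mulVec_eq_zero) j₀).complex_ofReal
  refine ⟨fourierCoeff (g 0), fourierCoeff (g 1),
    AddCircle.summable_sq_norm_fourierCoeff _, AddCircle.summable_sq_norm_fourierCoeff _, ?_,
    heig 0, heig 1⟩
  convert hindep using 1
  ext c : 1
  fin_cases c <;> rfl

/-- duality: reducibility to the identity produces a doubly degenerate
dual eigenvalue.  If `L^v_{E,w}(x) H(x) = H(x+α)` for some `H ∈ C^ω(𝕋, Sp_{2l×2}(ℝ))`,
then the dual finite-range operator `(Lu)_n = Σ v̂_k u_{n+k} + w(nα) u_n` has two linearly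
independent `ℓ²` eigenfunctions with eigenvalue `E`. -/
theorem statement16
    (α : ℝ) (hα : Irrational α) (E : ℝ)
    (d l : ℕ) (hd : 1 ≤ d) (hl : 1 ≤ l)
    (vhat what : ℤ → ℝ)
    (hvsupp : ∀ k : ℤ, (d : ℤ) < |k| → vhat k = 0)
    (hveven : ∀ k : ℤ, vhat (-k) = vhat k) (hvlead : vhat (d : ℤ) ≠ 0)
    (hwsupp : ∀ k : ℤ, (l : ℤ) < |k| → what k = 0)
    (hweven : ∀ k : ℤ, what (-k) = what k) (hwlead : what (l : ℤ) ≠ 0)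
    (H : ℝ → Matrix (Fin (2*l)) (Fin 2) ℝ)
    (hHan : IsAnalyticPeriodic H)
    (hHsymp : ∀ x : ℝ, IsSymplCol l what (H x))
    (hconj : ∀ x : ℝ,
      dualMat l what (fun t => trigPoly d vhat (t : ℂ)) (E : ℂ) x * (H x).map Complex.ofReal
        = (H (x + α)).map Complex.ofReal) :
    ∃ u v : ℤ → ℂ,
      Summable (fun n : ℤ => ‖u n‖ ^ 2) ∧
      Summable (fun n : ℤ => ‖v n‖ ^ 2) ∧
      LinearIndependent ℂ ![u, v] ∧
      (∀ n : ℤ,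
        (∑ k ∈ Finset.Icc (-(d:ℤ)) (d:ℤ), (vhat k : ℂ) * u (n + k)) +
          trigPoly l what (((n : ℝ) * α : ℝ) : ℂ) * u n = (E : ℂ) * u n) ∧
      (∀ n : ℤ,
        (∑ k ∈ Finset.Icc (-(d:ℤ)) (d:ℤ), (vhat k : ℂ) * v (n + k)) +
          trigPoly l what (((n : ℝ) * α : ℝ) : ℂ) * v n = (E : ℂ) * v n) :=
  statement16_general α E d l hl vhat what hveven hwlead H hHan hHsymp hconj
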